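/- arXiv:2603.11523 — 3 statements merged into one kernel-verified Lean document; each statement's English description precedes it below -/
import Mathlib

section
/- Let $P$ be an $m \times d$ column-stochastic matrix, $Q$ a $d \times m$ matrix with $QP = I_d$, and suppose $X^{(1)}, \dots, X^{(n)}$ are i.i.d. samples from a categorical distribution with parameter $\bm{\theta} \in \Delta^{d-1}$. With one-hot responses $O^{(i)}$ satisfying $\Pr(O^{(i)} = o \mid X^{(i)} = x) = P_{o,x}$, the estimator $\hat{\bm{\theta}} = \frac{1}{n} Q \sum_i O^{(i)}$ satisfies $\mathbb{E}[\hat{\bm{\theta}}] = \bm{\theta}$ and $\mathrm{Var}(\hat{\theta}(x)) = \frac{1}{n}\left( [(Q \circ Q) P \bm{\theta}]_x - \theta_x^2 \right)$ for each $x \in [d]$. -/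
open Matrix BigOperators Finset

lemma single_coord_exp {n m : ℕ} (μ : Fin m → ℝ) (hμ : ∑ o, μ o = 1)
    (i₀ : Fin n) (g : Fin m → ℝ) :
    ∑ ω : Fin n → Fin m, (∏ i, μ (ω i)) * g (ω i₀) = ∑ o, μ o * g o := by
  have key : ∀ ω : Fin n → Fin m,
      (∏ i, μ (ω i)) * g (ω i₀) = ∏ i, (μ (ω i) * if i = i₀ then g (ω i) else 1) := by
    intro ω
    rw [Finset.prod_mul_distrib]
    congr 1
    rw [Finset.prod_ite_eq' Finset.univ i₀ (fun i => g (ω i))]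
    simp
  simp_rw [key]
  rw [← Fintype.prod_sum (fun i o => μ o * if i = i₀ then g o else 1)]
  rw [Finset.prod_eq_single i₀]
  · simp
  · intro b _ hb
    simp [hb, ← Finset.sum_mul, hμ]
  · simp

lemma prod_two_distinct {n : ℕ} (i₀ j₀ : Fin n) (hne : i₀ ≠ j₀) (F : Fin n → ℝ)
    (hF : ∀ i, i ≠ i₀ → i ≠ j₀ → F i = 1) : ∏ i, F i = F i₀ * F j₀ := by
  rw [← Finset.prod_mul_prod_compl ({i₀, j₀} : Finset (Fin n)) F,
    Finset.prod_pair hne]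
  rw [Finset.prod_eq_one, mul_one]
  intro i hi
  simp only [Finset.mem_compl, Finset.mem_insert, Finset.mem_singleton, not_or] at hi
  exact hF i hi.1 hi.2

lemma two_coord_exp {n m : ℕ} (μ : Fin m → ℝ) (hμ : ∑ o, μ o = 1)
    (i₀ j₀ : Fin n) (hne : i₀ ≠ j₀) (g h : Fin m → ℝ) :
    ∑ ω : Fin n → Fin m, (∏ i, μ (ω i)) * (g (ω i₀) * h (ω j₀)) =
      (∑ o, μ o * g o) * (∑ o, μ o * h o) := by
  have key : ∀ ω : Fin n → Fin m,
      (∏ i, μ (ω i)) * (g (ω i₀) * h (ω j₀)) =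
        ∏ i, (μ (ω i) * (if i = i₀ then g (ω i) else if i = j₀ then h (ω i) else 1)) := by
    intro ω
    rw [Finset.prod_mul_distrib]
    congr 1
    rw [prod_two_distinct i₀ j₀ hne]
    · simp [hne, hne.symm]
    · intro i h1 h2; simp [h1, h2]
  simp_rw [key]
  rw [← Fintype.prod_sum (fun i o => μ o *
    (if i = i₀ then g o else if i = j₀ then h o else 1))]
  rw [prod_two_distinct i₀ j₀ hne]
  · simp [hne, hne.symm]
  · intro i h1 h2
    simp [h1, h2, ← Finset.sum_mul, hμ]

/-- for i.i.d. samples from a categorical distribution `θ`, the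
linear estimator `θ̂ = (1/n) Q ∑ᵢ O⁽ⁱ⁾` is unbiased with coordinatewise
variance `(1/n)([(Q∘Q) P θ]ₓ - θₓ²)`.  Responses are modeled on the finite
product space `(Fin m)^n`; each coordinate has marginal distribution `P θ`
and the coordinates are independent, so the weight of `ω` is
`∏ᵢ (P *ᵥ θ) (ω i)`. -/
theorem linear_estimator_dist_unbiased_var (m d n : ℕ) (hn : 0 < n)
    (P : Matrix (Fin m) (Fin d) ℝ)
    (hPnn : ∀ o x, 0 ≤ P o x) (hPcol : ∀ x, ∑ o, P o x = 1)
    (Q : Matrix (Fin d) (Fin m) ℝ) (hQP : Q * P = 1)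
    (θ : Fin d → ℝ) (hθnn : ∀ x, 0 ≤ θ x) (hθsum : ∑ x, θ x = 1)
    (w : (Fin n → Fin m) → ℝ)
    (hw : ∀ ω, w ω = ∏ i, (P *ᵥ θ) (ω i))
    (that : (Fin n → Fin m) → Fin d → ℝ)
    (hthat : ∀ ω x, that ω x = (1 / (n : ℝ)) * ∑ i, Q x (ω i)) :
    (∀ x, ∑ ω : Fin n → Fin m, w ω * that ω x = θ x) ∧
    (∀ x, ∑ ω : Fin n → Fin m, w ω * (that ω x - θ x) ^ 2 =
      (1 / (n : ℝ)) * ((((Q.map fun q => q ^ 2) * P) *ᵥ θ) x - (θ x) ^ 2)) := by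
  set μ : Fin m → ℝ := P *ᵥ θ with hμdef
  have hnR : (n : ℝ) ≠ 0 := Nat.cast_ne_zero.mpr hn.ne'
  have hμ : ∑ o, μ o = 1 := by
    simp only [hμdef, mulVec, dotProduct]
    rw [Finset.sum_comm]
    simp_rw [← Finset.sum_mul, hPcol, one_mul]
    exact hθsum
  have hE1 : ∀ x, ∑ o, μ o * Q x o = θ x := by
    intro x
    have : (Q *ᵥ μ) x = θ x := by
      rw [hμdef, mulVec_mulVec, hQP, one_mulVec]
    rw [← this, mulVec, dotProduct]
    simp_rw [mul_comm]
  have hS : ∀ x, ∑ o, μ o * (Q x o) ^ 2 = (((Q.map fun q => q ^ 2) * P) *ᵥ θ) x := by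
    intro x
    rw [← mulVec_mulVec, mulVec, dotProduct]
    simp_rw [map_apply, mul_comm]
    rfl
  -- the unbiasedness computation
  have part1 : ∀ x, ∑ ω : Fin n → Fin m, w ω * that ω x = θ x := by
    intro x
    have key : ∀ ω, w ω * that ω x = (1/(n:ℝ)) * ∑ i, (∏ j, μ (ω j)) * Q x (ω i) := by
      intro ω
      rw [hw, hthat, mul_left_comm, Finset.mul_sum]
    simp_rw [key]
    rw [← Finset.mul_sum]
    rw [Finset.sum_comm (s := (Finset.univ : Finset (Fin n → Fin m)))
      (t := (Finset.univ : Finset (Fin n))) (f := fun ω i => (∏ j, μ (ω j)) * Q x (ω i))]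
    have key2 : ∀ i : Fin n, ∑ ω : Fin n → Fin m, (∏ j, μ (ω j)) * Q x (ω i) = θ x := by
      intro i
      rw [single_coord_exp μ hμ i (fun o => Q x o), hE1]
    simp_rw [key2]
    rw [Finset.sum_const, Finset.card_univ, Fintype.card_fin, nsmul_eq_mul]
    field_simp
  refine ⟨part1, ?_⟩
  intro x
  set S := (((Q.map fun q => q ^ 2) * P) *ᵥ θ) x with hSdef
  have hw1 : ∑ ω : Fin n → Fin m, w ω = 1 := by
    simp_rw [hw]
    rw [← Fintype.prod_sum (fun _ o => μ o)]
    simp [hμ]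
  have hsq : ∑ ω : Fin n → Fin m, w ω * (that ω x) ^ 2 =
      (1 / (n:ℝ))^2 * ((n : ℝ) * S + (n : ℝ) * ((n:ℝ) - 1) * (θ x)^2) := by
    have expand : ∀ ω, w ω * (that ω x) ^ 2 =
        (1/(n:ℝ))^2 * ∑ i, ∑ j, (∏ k, μ (ω k)) * (Q x (ω i) * Q x (ω j)) := by
      intro ω
      rw [hw, hthat, mul_pow, pow_two (∑ i, Q x (ω i)), Finset.sum_mul_sum]
      simp only [Finset.mul_sum]
      refine Finset.sum_congr rfl fun i _ => Finset.sum_congr rfl fun j _ => ?_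
      ring
    simp_rw [expand]
    rw [← Finset.mul_sum]
    congr 1
    rw [Finset.sum_comm]
    have inner : ∀ i : Fin n, ∑ ω : Fin n → Fin m,
        ∑ j, (∏ k, μ (ω k)) * (Q x (ω i) * Q x (ω j)) = S + ((n:ℝ) - 1) * (θ x)^2 := by
      intro i
      rw [Finset.sum_comm]
      have term : ∀ j : Fin n, ∑ ω : Fin n → Fin m,
          (∏ k, μ (ω k)) * (Q x (ω i) * Q x (ω j)) =
          if j = i then S else (θ x)^2 := by
        intro j
        by_cases hij : j = i
        · subst hij
          rw [if_pos rfl]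
          have : ∀ ω : Fin n → Fin m, (∏ k, μ (ω k)) * (Q x (ω j) * Q x (ω j)) =
              (∏ k, μ (ω k)) * ((fun o => (Q x o)^2) (ω j)) := by
            intro ω; ring_nf
          simp_rw [this]
          rw [single_coord_exp μ hμ j (fun o => (Q x o)^2), hS]
        · rw [if_neg hij]
          rw [two_coord_exp μ hμ i j (fun h => hij h.symm) (fun o => Q x o) (fun o => Q x o),
            hE1, sq]
      simp_rw [term]
      have split : ∀ j : Fin n, (if j = i then S else θ x ^ 2) =
          θ x ^ 2 + (if j = i then S - θ x ^ 2 else 0) := by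
        intro j; split <;> ring
      simp_rw [split]
      rw [Finset.sum_add_distrib, Finset.sum_ite_eq' Finset.univ i,
        Finset.sum_const, Finset.card_univ, Fintype.card_fin, nsmul_eq_mul]
      simp only [Finset.mem_univ, if_pos]
      ring
    simp_rw [inner]
    rw [Finset.sum_const, Finset.card_univ, Fintype.card_fin, nsmul_eq_mul]
    ring
  have expand2 : ∀ ω, w ω * (that ω x - θ x)^2 =
      w ω * (that ω x)^2 - 2 * θ x * (w ω * that ω x) + (θ x)^2 * w ω := by
    intro ω; ring
  simp_rw [expand2]
  rw [Finset.sum_add_distrib, Finset.sum_sub_distrib, ← Finset.mul_sum, ← Finset.mul_sum,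
    hsq, part1 x, hw1]
  field_simp
  ring
end

section
/- Let $\mathscr{I}_U$ be a symmetric positive-definite $d \times d$ matrix satisfying $\mathscr{I}_U \bm{\theta} = \mathbf{1}_d$ for some $\bm{\theta} \in \Delta^{d-1}$. Define $\mathscr{I}_C = \mathscr{I}_U - \mathbf{1}_d \mathbf{1}_d^T$ and $\mathscr{I}_C^{+} = \mathscr{I}_U^{-1} - \bm{\theta}\bm{\theta}^T$. Then $\mathscr{I}_C^{+} \mathscr{I}_C \mathscr{I}_C^{+} = \mathscr{I}_C^{+}$, i.e., $\mathscr{I}_C^{+}$ is a generalized inverse of $\mathscr{I}_C$ in the reflexive sense. -/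
/-!
Write `G = A⁻¹ - θψᵀ` and `C = A - uvᵀ`, where `Aθ = u`, `ψᵀA = vᵀ` and `ψᵀu = 1`.
Expanding the rank-one products gives `G C = 1 - θvᵀ`, and since `vᵀθ = ψᵀAθ = 1` this
is an oblique projection fixing the range of `G`, so `G C G = G`. With `A = 𝓘_U`,
`ψ = θ` and `u = v = 𝟏`, symmetry of `𝓘_U` gives `ψᵀA = vᵀ` and `θ ∈ Δ` gives `ψᵀu = 1`.
-/

open Matrix

namespace Matrix

variable {n R : Type*} [Fintype n] [DecidableEq n] [CommRing R]
  {A : Matrix n n R} {θ ψ u v : n → R}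

theorem inv_sub_vecMulVec_mul_sub_vecMulVec (hA : IsUnit A.det) (hθ : A *ᵥ θ = u)
    (hψ : ψ ᵥ* A = v) (hψu : ψ ⬝ᵥ u = 1) :
    (A⁻¹ - vecMulVec θ ψ) * (A - vecMulVec u v) = 1 - vecMulVec θ v := by
  have hAu : A⁻¹ *ᵥ u = θ := by rw [← hθ, mulVec_mulVec, nonsing_inv_mul A hA, one_mulVec]
  rw [sub_mul, mul_sub, mul_sub, nonsing_inv_mul A hA, mul_vecMulVec, hAu, vecMulVec_mul, hψ,
    vecMulVec_mul_vecMulVec, hψu, one_smul]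
  abel

theorem one_sub_vecMulVec_mul_inv_sub_vecMulVec (hA : IsUnit A.det) (hθ : A *ᵥ θ = u)
    (hψ : ψ ᵥ* A = v) (hψu : ψ ⬝ᵥ u = 1) :
    (1 - vecMulVec θ v) * (A⁻¹ - vecMulVec θ ψ) = A⁻¹ - vecMulVec θ ψ := by
  have hvA : v ᵥ* A⁻¹ = ψ := by rw [← hψ, vecMul_vecMul, mul_nonsing_inv A hA, vecMul_one]
  have hvθ : v ⬝ᵥ θ = 1 := by rw [← hψ, ← dotProduct_mulVec, hθ, hψu]
  rw [sub_mul, one_mul, mul_sub, vecMulVec_mul, hvA, vecMulVec_mul_vecMulVec, hvθ, one_smul,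
    sub_self, sub_zero]

theorem inv_sub_vecMulVec_mul_sub_vecMulVec_mul_inv_sub_vecMulVec (hA : IsUnit A.det)
    (hθ : A *ᵥ θ = u) (hψ : ψ ᵥ* A = v) (hψu : ψ ⬝ᵥ u = 1) :
    (A⁻¹ - vecMulVec θ ψ) * (A - vecMulVec u v) * (A⁻¹ - vecMulVec θ ψ) =
      A⁻¹ - vecMulVec θ ψ := by
  rw [inv_sub_vecMulVec_mul_sub_vecMulVec hA hθ hψ hψu,
    one_sub_vecMulVec_mul_inv_sub_vecMulVec hA hθ hψ hψu]

end Matrix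

theorem constrained_fisher_reflexive_ginverse_general (d : ℕ)
    (IU : Matrix (Fin d) (Fin d) ℝ) (hIU : IU.PosDef)
    (θ : Fin d → ℝ) (hθsum : ∑ x, θ x = 1)
    (hIUθ : IU *ᵥ θ = fun _ => (1 : ℝ))
    (IC ICp : Matrix (Fin d) (Fin d) ℝ)
    (hIC : IC = IU - Matrix.of fun _ _ => (1 : ℝ))
    (hICp : ICp = IU⁻¹ - Matrix.vecMulVec θ θ) :
    ICp * IC * ICp = ICp := by
  have hdet : IsUnit IU.det := (isUnit_iff_isUnit_det IU).mp hIU.isUnit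
  have hθIU : θ ᵥ* IU = 1 := by
    rw [← mulVec_transpose, ← conjTranspose_eq_transpose_of_trivial, hIU.isHermitian.eq, hIUθ]
    rfl
  have hθ1 : θ ⬝ᵥ 1 = 1 := by rw [dotProduct_one, hθsum]
  have hJ : (Matrix.of fun _ _ => (1 : ℝ)) = vecMulVec (1 : Fin d → ℝ) (1 : Fin d → ℝ) := by
    ext; simp [vecMulVec_apply]
  rw [hIC, hICp, hJ]
  exact inv_sub_vecMulVec_mul_sub_vecMulVec_mul_inv_sub_vecMulVec hdet hIUθ hθIU hθ1

/-- if `𝓘_U` is symmetric positive-definite with `𝓘_U θ = 1`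
for `θ` in the probability simplex, then `𝓘_C⁺ = 𝓘_U⁻¹ - θθᵀ` is a reflexive
generalized inverse of `𝓘_C = 𝓘_U - 11ᵀ`: `𝓘_C⁺ 𝓘_C 𝓘_C⁺ = 𝓘_C⁺`. -/
theorem constrained_fisher_reflexive_ginverse (d : ℕ)
    (IU : Matrix (Fin d) (Fin d) ℝ) (hIU : IU.PosDef)
    (θ : Fin d → ℝ) (hθnn : ∀ x, 0 ≤ θ x) (hθsum : ∑ x, θ x = 1)
    (hIUθ : IU *ᵥ θ = fun _ => (1 : ℝ))
    (IC ICp : Matrix (Fin d) (Fin d) ℝ)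
    (hIC : IC = IU - Matrix.of fun _ _ => (1 : ℝ))
    (hICp : ICp = IU⁻¹ - Matrix.vecMulVec θ θ) :
    ICp * IC * ICp = ICp :=
  constrained_fisher_reflexive_ginverse_general d IU hIU θ hθsum hIUθ IC ICp hIC hICp
end

section
/- Let $d \ge 2$, $1 \le k \le d-1$, and let $W$ be the $d \times d$ matrix with diagonal entries $\frac{k}{d}$ and off-diagonal entries $\frac{k(k-1)}{d(d-1)}$. Then there exist at most $\frac{d(d-1)}{2} + 1$ subsets $T_1, \dots, T_r \subseteq [d]$ each of size $k$, and nonnegative weights $p_1, \dots, p_r$ with $\sum_j p_j = 1$, such that $W = \sum_{j=1}^r p_j \, \mathbf{1}_{T_j} \mathbf{1}_{T_j}^T$, where $\mathbf{1}_T \in \{0,1\}^d$ is the indicator vector of $T$. -/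
open Matrix BigOperators Finset

lemma aux_choose_id (a b : ℕ) :
    (a+2).choose (b+2) * ((b+2) * (b+1)) = a.choose b * ((a+2) * (a+1)) := by
  have h1 := Nat.add_one_mul_choose_eq (a+1) (b+1)
  have h2 := Nat.add_one_mul_choose_eq a b
  nlinarith [h1, h2]

lemma aux_count {d k : ℕ} (hk : 2 ≤ k) {i j : Fin d} (hij : i ≠ j) :
    ((Finset.powersetCard k (univ : Finset (Fin d))).filter
      (fun T => i ∈ T ∧ j ∈ T)).card = (d-2).choose (k-2) := by
  have hcard : (((univ : Finset (Fin d)).erase i).erase j).card = d - 2 := by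
    rw [card_erase_of_mem, card_erase_of_mem] <;>
      simp [Finset.mem_erase, hij.symm, Fintype.card_fin]
    omega
  rw [← hcard, ← Finset.card_powersetCard]
  refine Finset.card_bij' (fun T _ => (T.erase i).erase j)
      (fun A _ => insert i (insert j A)) ?hi ?hj ?left ?right
  case hi =>
    intro T hT
    simp only [Finset.mem_filter, Finset.mem_powersetCard] at hT
    obtain ⟨⟨-, hTc⟩, hiT, hjT⟩ := hT
    rw [Finset.mem_powersetCard]
    constructor
    · intro x hx
      simp only [Finset.mem_erase] at hx ⊢
      exact ⟨hx.1, hx.2.1, mem_univ _⟩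
    · rw [card_erase_of_mem (by simp [Finset.mem_erase, hjT, hij.symm]),
        card_erase_of_mem hiT, hTc]
      omega
  case hj =>
    intro A hA
    rw [Finset.mem_powersetCard] at hA
    obtain ⟨hAsub, hAc⟩ := hA
    have hjA : j ∉ A := fun h => by simpa using (hAsub h)
    have hiA : i ∉ insert j A := by
      simp only [Finset.mem_insert]
      rintro (rfl | h)
      · exact hij rfl
      · exact absurd (hAsub h) (by simp)
    simp only [Finset.mem_filter, Finset.mem_powersetCard]
    refine ⟨⟨fun x _ => mem_univ x, ?_⟩, by simp, by simp⟩
    rw [card_insert_of_notMem hiA, card_insert_of_notMem hjA, hAc]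
    omega
  case left =>
    intro T hT
    simp only [Finset.mem_filter, Finset.mem_powersetCard] at hT
    obtain ⟨⟨-, -⟩, hiT, hjT⟩ := hT
    show insert i (insert j ((T.erase i).erase j)) = T
    rw [Finset.insert_erase (by simp [Finset.mem_erase, hjT, hij.symm]),
      Finset.insert_erase hiT]
  case right =>
    intro A hA
    rw [Finset.mem_powersetCard] at hA
    obtain ⟨hAsub, -⟩ := hA
    have hjA : j ∉ A := fun h => by simpa using (hAsub h)
    have hiA : i ∉ insert j A := by
      simp only [Finset.mem_insert]
      rintro (rfl | h)
      · exact hij rfl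
      · exact absurd (hAsub h) (by simp)
    show ((insert i (insert j A)).erase i).erase j = A
    rw [Finset.erase_insert hiA, Finset.erase_insert hjA]

/-- Carathéodory bound on the number of responses: the matrix
`W` with diagonal `k/d` and off-diagonal `k(k-1)/(d(d-1))` is a convex
combination of at most `d(d-1)/2 + 1` outer products `1_T 1_Tᵀ` of indicator
vectors of `k`-element subsets of `[d]`. -/
theorem caratheodory_support_matrix (d k : ℕ) (hd : 2 ≤ d)
    (hk1 : 1 ≤ k) (hkd : k ≤ d - 1)
    (W : Matrix (Fin d) (Fin d) ℝ)
    (hW : ∀ i j, W i j = if i = j then (k : ℝ) / d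
      else (k : ℝ) * ((k : ℝ) - 1) / ((d : ℝ) * ((d : ℝ) - 1))) :
    ∃ (r : ℕ), r ≤ d * (d - 1) / 2 + 1 ∧
      ∃ (T : Fin r → Finset (Fin d)) (p : Fin r → ℝ),
        (∀ j, (T j).card = k) ∧ (∀ j, 0 ≤ p j) ∧ (∑ j, p j = 1) ∧
        W = ∑ j, p j •
          Matrix.vecMulVec (fun x => if x ∈ T j then (1 : ℝ) else 0)
            (fun x => if x ∈ T j then (1 : ℝ) else 0) := by
  have hd0 : (0:ℝ) < d := by positivity
  have hd1 : (d:ℝ) - 1 ≠ 0 := by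
    have : (2:ℝ) ≤ d := by exact_mod_cast hd
    linarith
  have hdle : d ≤ d * (d - 1) / 2 + 1 := by
    have h1 : 2 * (d - 1) ≤ d * (d - 1) := Nat.mul_le_mul_right _ hd
    have h2 : d - 1 ≤ d * (d - 1) / 2 := by omega
    omega
  rcases eq_or_lt_of_le hk1 with hk1' | hk2
  · -- k = 1
    subst hk1'
    refine ⟨d, hdle, fun j => {j}, fun _ => 1 / d, fun j => by simp, fun j => by positivity,
      by simp [Finset.card_univ]; field_simp, ?_⟩
    ext a b
    rw [hW]
    simp only [Matrix.sum_apply, Matrix.smul_apply, Matrix.vecMulVec_apply, smul_eq_mul,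
      Finset.mem_singleton]
    by_cases hab : a = b
    · subst hab
      rw [if_pos rfl]
      rw [Finset.sum_eq_single a]
      · simp
      · intro c _ hca
        simp [Ne.symm hca]
      · simp
    · rw [if_neg hab]
      rw [Finset.sum_eq_zero]
      · norm_num
      · intro c _
        by_cases h1 : a = c
        · by_cases h2 : b = c
          · exact absurd (h1.trans h2.symm) hab
          · simp [h2]
        · simp [h1]
  · -- 2 ≤ k
    have hk2' : 2 ≤ k := hk2
    have hkdle : k ≤ d := le_trans hkd (Nat.sub_le d 1)
    have hk1R : (k:ℝ) - 1 ≠ 0 := by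
      have : (2:ℝ) ≤ k := by exact_mod_cast hk2'
      linarith
    -- the index type for off-diagonal coordinates
    set 𝒯 : Finset (Finset (Fin d)) := Finset.powersetCard k (univ : Finset (Fin d)) with h𝒯
    -- choose identity over ℝ
    have hchooseN : d.choose k * (k * (k-1)) = (d-2).choose (k-2) * (d * (d-1)) := by
      obtain ⟨a, rfl⟩ : ∃ a, d = a + 2 := ⟨d - 2, by omega⟩
      obtain ⟨b, rfl⟩ : ∃ b, k = b + 2 := ⟨k - 2, by omega⟩
      simpa using aux_choose_id a b
    have hCpos : (0:ℝ) < (d.choose k : ℝ) := by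
      exact_mod_cast Nat.choose_pos hkdle
    have hd1' : (0:ℝ) < (d:ℝ) - 1 := by
      have : (2:ℝ) ≤ d := by exact_mod_cast hd
      linarith
    have hchooseR : ((d-2).choose (k-2) : ℝ) / (d.choose k : ℝ)
        = (k:ℝ) * ((k:ℝ)-1) / ((d:ℝ) * ((d:ℝ)-1)) := by
      have hcast : (d.choose k : ℝ) * ((k:ℝ) * ((k:ℝ) - 1))
          = ((d-2).choose (k-2) : ℝ) * ((d:ℝ) * ((d:ℝ) - 1)) := by
        have h2 := congrArg (Nat.cast (R := ℝ)) hchooseN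
        push_cast [Nat.cast_sub (show 1 ≤ k by omega),
          Nat.cast_sub (show 1 ≤ d by omega)] at h2
        linarith
      rw [div_eq_div_iff hCpos.ne' (by positivity)]
      linarith
    -- the coordinate functions
    let v : Finset (Fin d) → ({x : Sym2 (Fin d) // ¬ x.IsDiag} → ℝ) := fun T x =>
      Sym2.lift ⟨fun i j => (if i ∈ T then (1:ℝ) else 0) * (if j ∈ T then 1 else 0),
        fun i j => mul_comm _ _⟩ x.1
    have hv : ∀ (T : Finset (Fin d)) (i j : Fin d) (h : ¬ (s(i, j)).IsDiag),
        v T ⟨s(i, j), h⟩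
          = (if i ∈ T then (1:ℝ) else 0) * (if j ∈ T then 1 else 0) := by
      intro T i j h
      simp [v]
    let w : {x : Sym2 (Fin d) // ¬ x.IsDiag} → ℝ :=
      fun _ => (k:ℝ) * ((k:ℝ)-1) / ((d:ℝ) * ((d:ℝ)-1))
    -- the sum of coordinates over all k-subsets
    have hsum_v : ∀ x, ∑ T ∈ 𝒯, v T x = ((d-2).choose (k-2) : ℝ) := by
      rintro ⟨z, hz⟩
      obtain ⟨i, j, rfl⟩ : ∃ i j, z = s(i, j) := by
        induction z using Sym2.ind with
        | _ i j => exact ⟨i, j, rfl⟩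
      have hij : i ≠ j := by simpa [Sym2.mk_isDiag_iff] using hz
      have : ∀ T ∈ 𝒯, v T ⟨s(i, j), hz⟩
          = if i ∈ T ∧ j ∈ T then (1:ℝ) else 0 := by
        intro T _
        rw [hv]
        split_ifs <;> simp_all
      rw [Finset.sum_congr rfl this, Finset.sum_boole]
      have := aux_count hk2' hij
      rw [h𝒯]
      exact_mod_cast this
    -- W's off-diagonal part lies in the convex hull
    have h𝒯card : (𝒯.card : ℝ) = (d.choose k : ℝ) := by
      rw [h𝒯, Finset.card_powersetCard, Finset.card_univ, Fintype.card_fin]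
    have hmem : w ∈ convexHull ℝ (v '' ↑𝒯) := by
      have hpos : (0:ℝ) < ∑ _T ∈ 𝒯, (1:ℝ) := by
        rw [Finset.sum_const, nsmul_eq_mul, mul_one, h𝒯card]
        exact hCpos
      have := Finset.centerMass_mem_convexHull 𝒯 (w := fun _ => (1:ℝ))
        (fun _ _ => zero_le_one) hpos (z := v)
        (fun T hT => Set.mem_image_of_mem _ hT)
      convert this using 1
      rw [Finset.centerMass]
      funext x
      simp only [Pi.smul_apply, Finset.sum_apply, one_smul, smul_eq_mul]
      rw [hsum_v x, Finset.sum_const, nsmul_eq_mul, mul_one, h𝒯card]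
      rw [inv_mul_eq_div, hchooseR]
    -- Carathéodory
    obtain ⟨ι, hι, z, q, hrange, hai, hqpos, hqsum, hrepr⟩ :=
      eq_pos_convex_span_of_mem_convexHull hmem
    have hcard : Fintype.card ι ≤ d * (d - 1) / 2 + 1 := by
      have h1 := hai.card_le_finrank_succ
      have h2 : Module.finrank ℝ (vectorSpan ℝ (Set.range z))
          ≤ Module.finrank ℝ ({x : Sym2 (Fin d) // ¬ x.IsDiag} → ℝ) :=
        Submodule.finrank_le _
      have h3 : Module.finrank ℝ ({x : Sym2 (Fin d) // ¬ x.IsDiag} → ℝ)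
          = d * (d - 1) / 2 := by
        rw [Module.finrank_pi, Sym2.card_subtype_not_diag, Fintype.card_fin,
          Nat.choose_two_right]
      omega
    refine ⟨Fintype.card ι, hcard, ?_⟩
    set e : Fin (Fintype.card ι) ≃ ι := (Fintype.equivFin ι).symm with he
    have hchoice : ∀ i : ι, ∃ T ∈ 𝒯, v T = z i := by
      intro i
      obtain ⟨T, hT, hvT⟩ := hrange (Set.mem_range_self i)
      exact ⟨T, hT, hvT⟩
    choose Tf hTf hvTf using hchoice
    refine ⟨fun j => Tf (e j), fun j => q (e j), ?_, ?_, ?_, ?_⟩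
    · intro j
      have := hTf (e j)
      rw [h𝒯, Finset.mem_powersetCard] at this
      exact this.2
    · exact fun j => (hqpos (e j)).le
    · rw [Equiv.sum_comp e q, hqsum]
    · -- the matrix identity
      have hkey : ∀ x, ∑ j : Fin (Fintype.card ι), q (e j) * (v (Tf (e j)) x) = w x := by
        intro x
        have h1 : ∀ j, q (e j) * (v (Tf (e j)) x) = q (e j) * (z (e j) x) := by
          intro j
          rw [hvTf]
        rw [Finset.sum_congr rfl (fun j _ => h1 j),
          Equiv.sum_comp e (fun i => q i * z i x)]
        have := congrFun hrepr x
        simpa [Finset.sum_apply, Pi.smul_apply, smul_eq_mul] using this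
      have hoff : ∀ a b : Fin d, a ≠ b →
          ∑ j : Fin (Fintype.card ι), q (e j) *
            ((if a ∈ Tf (e j) then (1:ℝ) else 0) * (if b ∈ Tf (e j) then 1 else 0))
          = (k:ℝ) * ((k:ℝ)-1) / ((d:ℝ) * ((d:ℝ)-1)) := by
        intro a b hab
        have hx : ¬ (s(a, b)).IsDiag := by simp [Sym2.mk_isDiag_iff, hab]
        have := hkey ⟨s(a, b), hx⟩
        simpa [hv] using this
      have hdiag : ∀ a : Fin d,
          ∑ j : Fin (Fintype.card ι), q (e j) * (if a ∈ Tf (e j) then (1:ℝ) else 0)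
          = (k:ℝ) / d := by
        intro a
        set S := ∑ j : Fin (Fintype.card ι), q (e j) * (if a ∈ Tf (e j) then (1:ℝ) else 0)
          with hS
        have hrow : ∑ b ∈ (univ : Finset (Fin d)).erase a,
            (∑ j : Fin (Fintype.card ι), q (e j) *
              ((if a ∈ Tf (e j) then (1:ℝ) else 0) * (if b ∈ Tf (e j) then 1 else 0)))
            = ((d:ℝ) - 1) * ((k:ℝ) * ((k:ℝ)-1) / ((d:ℝ) * ((d:ℝ)-1))) := by
          rw [Finset.sum_congr rfl (fun b hb =>
            hoff a b (Finset.mem_erase.mp hb).1.symm)]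
          rw [Finset.sum_const, Finset.card_erase_of_mem (Finset.mem_univ a),
            Finset.card_univ, Fintype.card_fin, nsmul_eq_mul,
            Nat.cast_sub (show 1 ≤ d by omega), Nat.cast_one]
        have hTc : ∀ j, (Tf (e j)).card = k := by
          intro j
          have := hTf (e j)
          rw [h𝒯, Finset.mem_powersetCard] at this
          exact this.2
        have hswap : ∑ b ∈ (univ : Finset (Fin d)).erase a,
            (∑ j : Fin (Fintype.card ι), q (e j) *
              ((if a ∈ Tf (e j) then (1:ℝ) else 0) * (if b ∈ Tf (e j) then 1 else 0)))
            = ((k:ℝ) - 1) * S := by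
          rw [Finset.sum_comm]
          rw [hS, Finset.mul_sum]
          refine Finset.sum_congr rfl (fun j _ => ?_)
          have hinner : ∑ b ∈ (univ : Finset (Fin d)).erase a,
              (if b ∈ Tf (e j) then (1:ℝ) else 0)
              = ((Tf (e j)).erase a).card := by
            rw [Finset.sum_boole]
            congr 2
            ext b
            simp only [Finset.mem_filter, Finset.mem_erase, Finset.mem_univ, true_and]
            tauto
          simp only [← mul_assoc]
          rw [← Finset.mul_sum, hinner]
          by_cases h : a ∈ Tf (e j)
          · rw [if_pos h, Finset.card_erase_of_mem h, hTc,
              Nat.cast_sub (show 1 ≤ k by omega), Nat.cast_one]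
            ring
          · simp [if_neg h]
        have heq : ((k:ℝ) - 1) * S
            = ((d:ℝ) - 1) * ((k:ℝ) * ((k:ℝ)-1) / ((d:ℝ) * ((d:ℝ)-1))) := by
          rw [← hswap, hrow]
        have hgoal : ((k:ℝ)-1) * ((k:ℝ)/d)
            = ((d:ℝ)-1) * ((k:ℝ)*((k:ℝ)-1)/((d:ℝ)*((d:ℝ)-1))) := by
          field_simp
        exact mul_left_cancel₀ hk1R (heq.trans hgoal.symm)
      ext a b
      rw [hW]
      simp only [Matrix.sum_apply, Matrix.smul_apply, Matrix.vecMulVec_apply, smul_eq_mul]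
      by_cases hab : a = b
      · subst hab
        rw [if_pos rfl, ← hdiag a]
        refine Finset.sum_congr rfl (fun j _ => ?_)
        by_cases h : a ∈ Tf (e j) <;> simp [h]
      · rw [if_neg hab, ← hoff a b hab]
end
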